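/- Let ι be a finite index set, c : ι → ℝ a cost function with c(v) > 0 for all v and M = max over v ∈ ι of c(v). In the bipartite instance where each facility v ∈ ι is visited by exactly one person u_v with time fraction p(u_v, v) = 1 and infection probability f(u_v) = c(v)/M, the risk R(v) = Σ_{u : (u,v) ∈ E} f(u)·p(u,v) of each facility v and the risk r(u_v) = Σ_{v : (u,v) ∈ E} R(v)·p(u,v) of each person u_v both equal c(v)/M, and the total population risk after closing a set T ⊆ ι of facilities (which removes all edges incident to facilities in T) equals (Σ_{v ∈ ι} c(v) − Σ_{v ∈ T} c(v)) / M. -/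
import Mathlib


/-- The quantitative core of the Subset Sum reduction: in the bipartite
instance where each facility `v` is visited by exactly one person `u_v`
(so people are indexed by `ι` as well), with time fraction `p u v = 1` iff
`u = v` (and `0` otherwise, i.e. no edge), and infection probability
`f u = c u / M` where `M = max_v c v`, the facility risks
`R v = ∑_u f u * p u v` and person risks `r u = ∑_v R v * p u v` both equal
`c v / M`; and after closing a set `T` of facilities (which removes every edge
incident to a facility in `T`, i.e. sets `p' u v = 0` for `v ∈ T`), the total
population risk equals `((∑ v, c v) - ∑ v ∈ T, c v) / M`. -/
theorem bipartite_instance_risks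
    {ι : Type*} [Fintype ι] [DecidableEq ι] [Nonempty ι]
    (c : ι → ℝ) (hc : ∀ v, 0 < c v)
    (M : ℝ) (hM : M = Finset.univ.sup' Finset.univ_nonempty c)
    (p : ι → ι → ℝ) (hp : ∀ u v, p u v = if u = v then 1 else 0)
    (f : ι → ℝ) (hf : ∀ u, f u = c u / M)
    (R : ι → ℝ) (hR : ∀ v, R v = ∑ u, f u * p u v)
    (r : ι → ℝ) (hr : ∀ u, r u = ∑ v, R v * p u v)
    (T : Finset ι)
    (p' : ι → ι → ℝ) (hp' : ∀ u v, p' u v = if v ∈ T then 0 else p u v)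
    (R' : ι → ℝ) (hR' : ∀ v, R' v = ∑ u, f u * p' u v)
    (r' : ι → ℝ) (hr' : ∀ u, r' u = ∑ v, R' v * p' u v) :
    (∀ v, R v = c v / M) ∧ (∀ u, r u = c u / M) ∧
      (∑ u, r' u) = ((∑ v, c v) - ∑ v ∈ T, c v) / M := by
  have hRv : ∀ v, R v = c v / M := by
    intro v
    rw [hR]
    rw [Finset.sum_eq_single v]
    · rw [hp, if_pos rfl, hf, mul_one]
    · intro u _ hu
      rw [hp, if_neg hu, mul_zero]
    · simp
  have hru : ∀ u, r u = c u / M := by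
    intro u
    rw [hr]
    rw [Finset.sum_eq_single u]
    · rw [hp, if_pos rfl, hRv, mul_one]
    · intro v _ hv
      rw [hp, if_neg (Ne.symm hv), mul_zero]
    · simp
  refine ⟨hRv, hru, ?_⟩
  have hR'v : ∀ v, R' v = if v ∈ T then 0 else c v / M := by
    intro v
    rw [hR']
    by_cases hvT : v ∈ T
    · simp [hp', hvT]
    · rw [if_neg hvT]
      rw [Finset.sum_eq_single v]
      · rw [hp', if_neg hvT, hp, if_pos rfl, hf, mul_one]
      · intro u _ hu
        rw [hp', if_neg hvT, hp, if_neg hu, mul_zero]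
      · simp
  have hr'u : ∀ u, r' u = if u ∈ T then 0 else c u / M := by
    intro u
    rw [hr']
    rw [Finset.sum_eq_single u]
    · by_cases huT : u ∈ T
      · simp [hp', huT]
      · rw [hp', if_neg huT, hp, if_pos rfl, mul_one, hR'v, if_neg huT]
    · intro v _ hv
      by_cases hvT : v ∈ T
      · simp [hp', hvT]
      · rw [hp', if_neg hvT, hp, if_neg (Ne.symm hv), mul_zero]
    · simp
  calc (∑ u, r' u) = ∑ u, (if u ∈ T then 0 else c u / M) := by
        exact Finset.sum_congr rfl fun u _ => hr'u u
    _ = (∑ u, c u / M) - ∑ u ∈ T, c u / M := by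
        rw [eq_sub_iff_add_eq,
          show (∑ u ∈ T, c u / M) = ∑ u, if u ∈ T then c u / M else 0 by
            rw [Finset.sum_ite_mem, Finset.univ_inter],
          ← Finset.sum_add_distrib]
        refine Finset.sum_congr rfl fun u _ => ?_
        by_cases h : u ∈ T <;> simp [h]
    _ = ((∑ v, c v) - ∑ v ∈ T, c v) / M := by
        rw [sub_div, Finset.sum_div, Finset.sum_div]
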